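/- Let X, Y be metric spaces, g, h Hausdorff functions and Δ a scale. If E ⊆ X × Y is compact, then the mapping x ↦ lboxm^g_0(E_x) is Borel measurable and pack^{gh}_{Δ,0}(E) ≥ ∫ lboxm^g_0(E_x) d pack^h_Δ(x). -/

import Mathlib

open Filter MeasureTheory Set
open scoped ENNReal NNReal Topology

namespace ZPaper

variable {X : Type*} [MetricSpace X] {Y : Type*} [MetricSpace Y]

/-- The `δ`-capacity of a set `E`: the supremum of cardinalities of subsets of `E`
whose points are mutually more than `δ` apart. -/
noncomputable def capacity (δ : ℝ) (E : Set X) : ℝ≥0∞ :=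
  ⨆ (F : Finset X) (_ : ↑F ⊆ E ∧ ∀ x ∈ F, ∀ y ∈ F, x ≠ y → δ < dist x y),
    (F.card : ℝ≥0∞)

/-- Lower box (Minkowski) dimension: `liminf_{δ→0} log C_δ(E) / |log δ|`. -/
noncomputable def lbdim (E : Set X) : EReal :=
  Filter.liminf (fun δ : ℝ => (capacity δ E).log / ((|Real.log δ| : ℝ) : EReal)) (𝓝[>] (0:ℝ))

/-- Upper box (Minkowski) dimension: `limsup_{δ→0} log C_δ(E) / |log δ|`. -/
noncomputable def ubdim (E : Set X) : EReal :=
  Filter.limsup (fun δ : ℝ => (capacity δ E).log / ((|Real.log δ| : ℝ) : EReal)) (𝓝[>] (0:ℝ))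

/-- Upper packing dimension: infimum of `sup_n ubdim Eₙ` over countable covers of `E`. -/
noncomputable def updim (E : Set X) : EReal :=
  ⨅ (A : ℕ → Set X) (_ : E ⊆ ⋃ n, A n), ⨆ n, ubdim (A n)

/-- Lower packing dimension: infimum of `sup_n lbdim Eₙ` over countable covers of `E`. -/
noncomputable def lpdim (E : Set X) : EReal :=
  ⨅ (A : ℕ → Set X) (_ : E ⊆ ⋃ n, A n), ⨆ n, lbdim (A n)

/-- Directed lower packing dimension: infimum of `sup_n lbdim Eₙ` over increasing
sequences with union `E`. -/
noncomputable def dpdim (E : Set X) : EReal :=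
  ⨅ (A : ℕ → Set X) (_ : Monotone A ∧ (⋃ n, A n) = E), ⨆ n, lbdim (A n)

/-- A packing: a family of pairs (center, radius) with positive radii such that
`d(x_i, x_j) > r_i` for distinct members. -/
def IsPacking (π : Set (X × ℝ)) : Prop :=
  (∀ p ∈ π, 0 < p.2) ∧ ∀ p ∈ π, ∀ q ∈ π, p ≠ q → p.2 < dist p.1 q.1

/-- A packing of a set `E`: all centers belong to `E`. -/
def IsPackingOf (π : Set (X × ℝ)) (E : Set X) : Prop :=
  IsPacking π ∧ ∀ p ∈ π, p.1 ∈ E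

/-- A uniform packing: all radii equal. -/
def IsUniform (π : Set (X × ℝ)) : Prop := ∀ p ∈ π, ∀ q ∈ π, p.2 = q.2

/-- A scale: a set of positive reals with `0` in its closure. -/
def IsScale (Δ : Set ℝ) : Prop := Δ ⊆ Set.Ioi (0:ℝ) ∧ (0:ℝ) ∈ closure Δ

/-- A `(Δ,δ)`-packing of `E`: a packing of `E` with radii in `Δ ∩ (0, δ]`. -/
def IsScaledPacking (Δ : Set ℝ) (δ : ℝ) (π : Set (X × ℝ)) (E : Set X) : Prop :=
  IsPackingOf π E ∧ ∀ p ∈ π, p.2 ∈ Δ ∧ p.2 ≤ δ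

/-- `g(π) = Σ_i g(r_i)` for a packing `π`. -/
noncomputable def packVal (g : ℝ → ℝ) (π : Set (X × ℝ)) : ℝ≥0∞ :=
  ∑' p : π, ENNReal.ofReal (g p.1.2)

/-- `pack^g_{Δ,δ}(E) = sup{g(π) : π a (Δ,δ)-packing of E}`. -/
noncomputable def packPre (g : ℝ → ℝ) (Δ : Set ℝ) (δ : ℝ) (E : Set X) : ℝ≥0∞ :=
  ⨆ (π : Set (X × ℝ)) (_ : IsScaledPacking Δ δ π E), packVal g π

/-- `pack^g_{Δ,0}(E) = inf_{δ>0} pack^g_{Δ,δ}(E)`. -/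
noncomputable def packPre0 (g : ℝ → ℝ) (Δ : Set ℝ) (E : Set X) : ℝ≥0∞ :=
  ⨅ (δ : ℝ) (_ : 0 < δ), packPre g Δ δ E

/-- Uniform-packing (box) variant of `packPre`. -/
noncomputable def boxPre (g : ℝ → ℝ) (Δ : Set ℝ) (δ : ℝ) (E : Set X) : ℝ≥0∞ :=
  ⨆ (π : Set (X × ℝ)) (_ : IsScaledPacking Δ δ π E ∧ IsUniform π), packVal g π

/-- `boxm^g_{Δ,0}(E) = inf_{δ>0} boxm^g_{Δ,δ}(E)`. -/
noncomputable def boxPre0 (g : ℝ → ℝ) (Δ : Set ℝ) (E : Set X) : ℝ≥0∞ :=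
  ⨅ (δ : ℝ) (_ : 0 < δ), boxPre g Δ δ E

/-- Munroe's Method I construction. -/
noncomputable def methodI (τ : Set X → ℝ≥0∞) (E : Set X) : ℝ≥0∞ :=
  ⨅ (A : ℕ → Set X) (_ : E ⊆ ⋃ n, A n), ∑' n, τ (A n)

/-- The "directed" Method D construction. -/
noncomputable def methodD (τ : Set X → ℝ≥0∞) (E : Set X) : ℝ≥0∞ :=
  ⨅ (A : ℕ → Set X) (_ : Monotone A ∧ (⋃ n, A n) = E), ⨆ n, τ (A n)

/-- The `Δ`-packing measure `pack^g_Δ` (Method I of `pack^g_{Δ,0}`). -/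
noncomputable def packMeasure (g : ℝ → ℝ) (Δ : Set ℝ) : Set X → ℝ≥0∞ :=
  methodI (packPre0 g Δ)

/-- The `Δ`-box measure `boxm^g_Δ` (Method I of `boxm^g_{Δ,0}`). -/
noncomputable def boxMeasure (g : ℝ → ℝ) (Δ : Set ℝ) : Set X → ℝ≥0∞ :=
  methodI (boxPre0 g Δ)

/-- The upper packing pre-measure `upack^g_0 = pack^g_{(0,∞),0}`. -/
noncomputable def upackPre0 (g : ℝ → ℝ) : Set X → ℝ≥0∞ :=
  packPre0 g (Set.Ioi (0:ℝ))

/-- The upper packing (= packing) measure `upack^g`. -/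
noncomputable def upack (g : ℝ → ℝ) : Set X → ℝ≥0∞ :=
  methodI (upackPre0 g)

/-- The lower packing pre-measure `lpack^g_0(E) = inf_Δ pack^g_{Δ,0}(E)`. -/
noncomputable def lpackPre0 (g : ℝ → ℝ) (E : Set X) : ℝ≥0∞ :=
  ⨅ (Δ : Set ℝ) (_ : IsScale Δ), packPre0 g Δ E

/-- The lower packing measure `lpack^g`. -/
noncomputable def lpack (g : ℝ → ℝ) : Set X → ℝ≥0∞ :=
  methodI (lpackPre0 g)

/-- The directed lower packing set function `dpack^g` (Method D of `lpack^g_0`). -/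
noncomputable def dpack (g : ℝ → ℝ) : Set X → ℝ≥0∞ :=
  methodD (lpackPre0 g)

/-- The lower box (Hewitt–Stromberg) pre-measure `lboxm^g_0(E) = liminf_{δ→0} C_δ(E)·g(δ)`. -/
noncomputable def lboxPre0 (g : ℝ → ℝ) (E : Set X) : ℝ≥0∞ :=
  Filter.liminf (fun δ : ℝ => capacity δ E * ENNReal.ofReal (g δ)) (𝓝[>] (0:ℝ))

/-- The upper box pre-measure `uboxm^g_0(E) = limsup_{δ→0} C_δ(E)·g(δ)`. -/
noncomputable def uboxPre0 (g : ℝ → ℝ) (E : Set X) : ℝ≥0∞ :=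
  Filter.limsup (fun δ : ℝ => capacity δ E * ENNReal.ofReal (g δ)) (𝓝[>] (0:ℝ))

/-- The lower box (Hewitt–Stromberg) measure `lboxm^g`. -/
noncomputable def lbox (g : ℝ → ℝ) : Set X → ℝ≥0∞ := methodI (lboxPre0 g)

/-- The upper box measure `uboxm^g`. -/
noncomputable def ubox (g : ℝ → ℝ) : Set X → ℝ≥0∞ := methodI (uboxPre0 g)

/-- The directed lower box set function `dboxm^g` (Method D of `lboxm^g_0`). -/
noncomputable def dbox (g : ℝ → ℝ) : Set X → ℝ≥0∞ := methodD (lboxPre0 g)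

/-- A Hausdorff function: a nondecreasing positive function on `(0,∞)`. -/
def IsHausdorffFunction (g : ℝ → ℝ) : Prop :=
  MonotoneOn g (Set.Ioi (0:ℝ)) ∧ ∀ r : ℝ, 0 < r → 0 < g r

/-- `f ≺ g`: `lim_{r→0⁺} f(r)/g(r) = 0`. -/
def HPrec (f g : ℝ → ℝ) : Prop :=
  Tendsto (fun r => f r / g r) (𝓝[>] (0:ℝ)) (𝓝 0)

/-- The section `E_x = {y : (x,y) ∈ E}` of a set `E ⊆ X × Y`. -/
def sect (E : Set (X × Y)) (x : X) : Set Y := {y | (x, y) ∈ E}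

/-- The integral of a nonnegative function against a set function, via the usual
supremum over Borel simple functions (for a Borel measure this is the Lebesgue integral). -/
noncomputable def sLintegral (τ : Set X → ℝ≥0∞) (f : X → ℝ≥0∞) : ℝ≥0∞ :=
  letI := borel X
  ⨆ (s : SimpleFunc X ℝ≥0∞) (_ : ∀ x, s x ≤ f x), ∑ y ∈ s.range, y * τ (⇑s ⁻¹' {y})

/-- The upper integral `∫* f dτ = inf{∫ φ dτ : φ ≥ f Borel measurable}`. -/
noncomputable def upperIntegral (τ : Set X → ℝ≥0∞) (f : X → ℝ≥0∞) : ℝ≥0∞ :=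
  letI := borel X
  ⨅ (φ : X → ℝ≥0∞) (_ : ∀ x, f x ≤ φ x) (_ : Measurable φ), sLintegral τ φ

/-- `(Q,m)`-homogeneity of a set `A`: `C_r(E) ≤ Q (diam E / r)^m` for all `E ⊆ A`
and all `0 < r ≤ diam E`. -/
def IsHomog (Q m : ℝ) (A : Set X) : Prop :=
  ∀ E : Set X, E ⊆ A → ∀ r : ℝ, 0 < r → ENNReal.ofReal r ≤ EMetric.diam E →
    capacity r E ≤ ENNReal.ofReal Q * (EMetric.diam E / ENNReal.ofReal r) ^ m

/-- The Assouad dimension of a set. -/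
noncomputable def adim (A : Set X) : ℝ≥0∞ :=
  ⨅ (m : ℝ) (_ : 0 < m ∧ ∃ Q : ℝ, 0 ≤ Q ∧ IsHomog Q m A), ENNReal.ofReal m

/-- The countably stable modification of the Assouad dimension. -/
noncomputable def sadim (A : Set X) : ℝ≥0∞ :=
  ⨅ (S : ℕ → Set X) (_ : A ⊆ ⋃ n, S n), ⨆ n, adim (S n)

/-- The upper packing dimension of a Borel measure. -/
noncomputable def updimM {Z : Type*} [MetricSpace Z] [MeasurableSpace Z]
    (μ : Measure Z) : EReal :=
  ⨅ (E : Set Z) (_ : MeasurableSet[borel Z] E ∧ 0 < μ E), updim E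

/-- The lower packing dimension of a Borel measure. -/
noncomputable def lpdimM {Z : Type*} [MetricSpace Z] [MeasurableSpace Z]
    (μ : Measure Z) : EReal :=
  ⨅ (E : Set Z) (_ : MeasurableSet[borel Z] E ∧ 0 < μ E), lpdim E

/-- Euclidean space `ℝ^m`. -/
abbrev Euc (m : ℕ) := EuclideanSpace ℝ (Fin m)

end ZPaper
open Filter MeasureTheory Set ZPaper
open scoped ENNReal NNReal Topology

/-!
Let `s` be a simple function below `x ↦ inf_{0<r<a} C_r(E_x) g(r)`. Weight each ball `(x, r)` of
a packing of `X` by `s(x) h(r)`. The Method I measure of the resulting weighted packing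
pre-measure is a metric outer measure, hence additive on the Borel level sets `{s = y}`, and on
each of them it dominates `y · pack^h_Δ`; so `∫ s d pack^h_Δ` is at most the weighted
pre-measure of `X`. Conversely, since `s(x) ≤ C_r(E_x) g(r)`, each ball `(x, r)` can be replaced
by the balls `((x, y), r)` with `y` running over an `r`-separated subset of `E_x` of
cardinality `C_r(E_x)`; for the maximum metric these form a packing of `E` whose
`gh`-value is at least the weighted value. Monotone convergence in `a → 0` gives the
inequality.

Measurability: `C_δ(E_x) > c` is an `F_σ` condition on `x` because `E` is compact, and the
infimum over `r` may be taken over a countable set of radii, since the monotone `g` is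
right-continuous off a countable set.
-/

namespace ZPaper

section MethodI

variable {X : Type*}

lemma methodI_le_tsum_inter {τ : Set X → ℝ≥0∞} {S U : Set X} {A : ℕ → Set X}
    (hA : S ⊆ ⋃ n, A n) (hU : S ⊆ U) : methodI τ S ≤ ∑' n, τ (A n ∩ U) :=
  iInf₂_le (fun n => A n ∩ U) fun x hx => by
    obtain ⟨n, hn⟩ := mem_iUnion.1 (hA hx)
    exact mem_iUnion.2 ⟨n, hn, hU hx⟩

lemma const_mul_methodI_le {τ₁ τ₂ : Set X → ℝ≥0∞} {c : ℝ≥0∞} {L T : Set X} (hT : T ⊆ L)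
    (h : ∀ S, c * τ₁ (S ∩ L) ≤ τ₂ S) : c * methodI τ₁ T ≤ methodI τ₂ T :=
  le_iInf₂ fun A hA => calc
    c * methodI τ₁ T ≤ c * ∑' n, τ₁ (A n ∩ L) := mul_le_mul_right (methodI_le_tsum_inter hA hT) c
    _ = ∑' n, c * τ₁ (A n ∩ L) := ENNReal.tsum_mul_left.symm
    _ ≤ ∑' n, τ₂ (A n) := ENNReal.tsum_le_tsum fun n => h (A n)

end MethodI

section MetricPremeasure

variable {X : Type*} [MetricSpace X]

lemma _root_.Metric.AreSeparated.exists_pos_le_dist {S T : Set X}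
    (h : Metric.AreSeparated S T) : ∃ r : ℝ, 0 < r ∧ ∀ x ∈ S, ∀ y ∈ T, r ≤ dist x y := by
  obtain ⟨r, hr0, hr⟩ := h
  refine ⟨(min r 1).toReal, ENNReal.toReal_pos (by simp [hr0]) (by simp), fun x hx y hy => ?_⟩
  rw [dist_edist]
  exact ENNReal.toReal_mono (edist_ne_top x y) ((min_le_left r 1).trans (hr x hx y hy))

lemma areSeparated_of_le_dist {S T : Set X} {r : ℝ} (hr : 0 < r)
    (h : ∀ x ∈ S, ∀ y ∈ T, r ≤ dist x y) : Metric.AreSeparated S T :=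
  ⟨ENNReal.ofReal r, by simpa using hr, fun x hx y hy => by
    rw [edist_dist]; exact ENNReal.ofReal_le_ofReal (h x hx y hy)⟩

structure IsMetricPremeasure (τ : Set X → ℝ≥0∞) : Prop where
  empty : τ ∅ = 0
  mono : Monotone τ
  add_le_union : ∀ ⦃S T : Set X⦄, Metric.AreSeparated S T → τ S + τ T ≤ τ (S ∪ T)

namespace IsMetricPremeasure

variable {τ : Set X → ℝ≥0∞}

lemma isMetric (hτ : IsMetricPremeasure τ) : (OuterMeasure.ofFunction τ hτ.empty).IsMetric := by
  intro S T hST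
  refine le_antisymm (measure_union_le S T) ?_
  obtain ⟨r, hr, hrST⟩ := hST.exists_pos_le_dist
  have hr3 : 0 < r / 3 := by positivity
  set U := Metric.thickening (r / 3) S
  set V := Metric.thickening (r / 3) T
  -- A cover of `S ∪ T` splits, through the separated neighbourhoods `U` and `V`,
  -- into covers of `S` and of `T` without increasing `τ`.
  have hUV : Metric.AreSeparated U V := areSeparated_of_le_dist hr3 fun u hu v hv => by
    obtain ⟨x, hx, hux⟩ := Metric.mem_thickening_iff.1 hu
    obtain ⟨y, hy, hvy⟩ := Metric.mem_thickening_iff.1 hv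
    have := hrST x hx y hy
    have := dist_triangle4 x u v y
    rw [dist_comm] at hux
    linarith
  refine le_iInf₂ fun A hA => ?_
  calc methodI τ S + methodI τ T ≤ ∑' n, τ (A n ∩ U) + ∑' n, τ (A n ∩ V) :=
        add_le_add (methodI_le_tsum_inter (subset_union_left.trans hA)
          (Metric.self_subset_thickening hr3 S))
          (methodI_le_tsum_inter (subset_union_right.trans hA)
          (Metric.self_subset_thickening hr3 T))
    _ = ∑' n, (τ (A n ∩ U) + τ (A n ∩ V)) := ENNReal.tsum_add.symm
    _ ≤ ∑' n, τ (A n) := ENNReal.tsum_le_tsum fun n =>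
        (hτ.add_le_union (hUV.mono inter_subset_right inter_subset_right)).trans
          (hτ.mono (union_subset inter_subset_left inter_subset_left))

variable [MeasurableSpace X] [BorelSpace X]

noncomputable def measure (hτ : IsMetricPremeasure τ) : Measure X :=
  (OuterMeasure.ofFunction τ hτ.empty).toMeasure
    ((BorelSpace.measurable_eq (α := X)).le.trans hτ.isMetric.borel_le_caratheodory)

lemma measure_apply (hτ : IsMetricPremeasure τ) {B : Set X} (hB : MeasurableSet B) :
    hτ.measure B = methodI τ B :=
  toMeasure_apply _ _ hB

lemma measure_univ_le (hτ : IsMetricPremeasure τ) : hτ.measure univ ≤ τ univ :=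
  (hτ.measure_apply MeasurableSet.univ).trans_le
    (OuterMeasure.ofFunction_le (m_empty := hτ.empty) _)

end IsMetricPremeasure

end MetricPremeasure

section PackingPremeasures

variable {X : Type*} [MetricSpace X] {Y : Type*} [MetricSpace Y]

section Packing

variable {Δ : Set ℝ} {δ : ℝ}

lemma IsScaledPacking.mono {π π' : Set (X × ℝ)} {S T : Set X} (h : IsScaledPacking Δ δ π S)
    (hπ : π' ⊆ π) (hST : S ⊆ T) : IsScaledPacking Δ δ π' T :=
  ⟨⟨⟨fun p hp => h.1.1.1 p (hπ hp), fun p hp q hq => h.1.1.2 p (hπ hp) q (hπ hq)⟩,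
    fun p hp => hST (h.1.2 p (hπ hp))⟩, fun p hp => h.2 p (hπ hp)⟩

lemma isScaledPacking_empty (S : Set X) : IsScaledPacking Δ δ ∅ S := by
  simp [IsScaledPacking, IsPackingOf, IsPacking]

lemma IsScaledPacking.union {π₁ π₂ : Set (X × ℝ)} {S T : Set X} {r : ℝ}
    (h₁ : IsScaledPacking Δ δ π₁ S) (h₂ : IsScaledPacking Δ δ π₂ T) (hδr : δ < r)
    (hST : ∀ x ∈ S, ∀ y ∈ T, r ≤ dist x y) : IsScaledPacking Δ δ (π₁ ∪ π₂) (S ∪ T) := by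
  have across : ∀ {π π' : Set (X × ℝ)} {S' T' : Set X}, IsScaledPacking Δ δ π S' →
      IsScaledPacking Δ δ π' T' → (∀ x ∈ S', ∀ y ∈ T', r ≤ dist x y) →
      ∀ p ∈ π, ∀ q ∈ π', p.2 < dist p.1 q.1 := fun h h' hS'T' p hp q hq =>
    ((h.2 p hp).2.trans_lt hδr).trans_le (hS'T' _ (h.1.2 p hp) _ (h'.1.2 q hq))
  have hTS : ∀ y ∈ T, ∀ x ∈ S, r ≤ dist y x := fun y hy x hx => dist_comm x y ▸ hST x hx y hy
  refine ⟨⟨⟨?_, ?_⟩, ?_⟩, ?_⟩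
  · rintro p (hp | hp)
    exacts [h₁.1.1.1 p hp, h₂.1.1.1 p hp]
  · rintro p (hp | hp) q (hq | hq) hpq
    exacts [h₁.1.1.2 p hp q hq hpq, across h₁ h₂ hST p hp q hq, across h₂ h₁ hTS p hp q hq,
      h₂.1.1.2 p hp q hq hpq]
  · rintro p (hp | hp)
    exacts [Or.inl (h₁.1.2 p hp), Or.inr (h₂.1.2 p hp)]
  · rintro p (hp | hp)
    exacts [h₁.2 p hp, h₂.2 p hp]

lemma packPre_mono_delta (g : ℝ → ℝ) {δ' : ℝ} (hδ : δ ≤ δ') (S : Set X) :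
    packPre g Δ δ S ≤ packPre g Δ δ' S :=
  iSup₂_le fun π hπ => le_iSup₂ (f := fun π (_ : IsScaledPacking Δ δ' π S) => packVal g π) π
    ⟨hπ.1, fun p hp => ⟨(hπ.2 p hp).1, (hπ.2 p hp).2.trans hδ⟩⟩

end Packing

noncomputable def weightedPackPre (w : X → ℝ≥0∞) (h : ℝ → ℝ) (Δ : Set ℝ) (δ : ℝ) (S : Set X) :
    ℝ≥0∞ :=
  ⨆ (π : Set (X × ℝ)) (_ : IsScaledPacking Δ δ π S), ∑' p : π, w p.1.1 * ENNReal.ofReal (h p.1.2)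

noncomputable def weightedPackPre0 (w : X → ℝ≥0∞) (h : ℝ → ℝ) (Δ : Set ℝ) (S : Set X) : ℝ≥0∞ :=
  ⨅ (δ : ℝ) (_ : 0 < δ), weightedPackPre w h Δ δ S

section WeightedPacking

variable {w : X → ℝ≥0∞} {h : ℝ → ℝ} {Δ : Set ℝ} {δ : ℝ}

lemma packPre0_eq_weightedPackPre0_one (h : ℝ → ℝ) (Δ : Set ℝ) :
    packPre0 h Δ = weightedPackPre0 (1 : X → ℝ≥0∞) h Δ := by
  funext S
  simp only [packPre0, packPre, packVal, weightedPackPre0, weightedPackPre, Pi.one_apply, one_mul]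

lemma le_weightedPackPre {π : Set (X × ℝ)} {S : Set X} (hπ : IsScaledPacking Δ δ π S) :
    ∑' p : π, w p.1.1 * ENNReal.ofReal (h p.1.2) ≤ weightedPackPre w h Δ δ S :=
  le_iSup₂ (f := fun π (_ : IsScaledPacking Δ δ π S) =>
    ∑' p : π, w p.1.1 * ENNReal.ofReal (h p.1.2)) π hπ

lemma weightedPackPre_mono {δ' : ℝ} {S T : Set X} (hδ : δ ≤ δ') (hST : S ⊆ T) :
    weightedPackPre w h Δ δ S ≤ weightedPackPre w h Δ δ' T :=
  iSup₂_le fun _ hπ => le_weightedPackPre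
    ⟨(hπ.mono subset_rfl hST).1, fun p hp => ⟨(hπ.2 p hp).1, (hπ.2 p hp).2.trans hδ⟩⟩

lemma weightedPackPre_add_le_union {S T : Set X} {r : ℝ} (hδr : δ < r)
    (hST : ∀ x ∈ S, ∀ y ∈ T, r ≤ dist x y) :
    weightedPackPre w h Δ δ S + weightedPackPre w h Δ δ T ≤ weightedPackPre w h Δ δ (S ∪ T) := by
  refine ENNReal.biSup_add_biSup_le' ⟨∅, isScaledPacking_empty S⟩ ⟨∅, isScaledPacking_empty T⟩
    fun π₁ h₁ π₂ h₂ => ?_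
  have hd : Disjoint π₁ π₂ := disjoint_left.2 fun p hp₁ hp₂ => by
    have := hST _ (h₁.1.2 p hp₁) _ (h₂.1.2 p hp₂)
    rw [dist_self] at this
    linarith [h₁.1.1.1 p hp₁, (h₁.2 p hp₁).2]
  rw [← ENNReal.summable.tsum_union_disjoint (f := fun p : X × ℝ => w p.1 * ENNReal.ofReal (h p.2))
    hd ENNReal.summable]
  exact le_weightedPackPre (h₁.union h₂ hδr hST)

lemma isMetricPremeasure_weightedPackPre0 : IsMetricPremeasure (weightedPackPre0 w h Δ) where
  empty := by
    refine le_antisymm ((iInf₂_le 1 one_pos).trans (iSup₂_le fun π hπ => ?_)) bot_le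
    obtain rfl : π = ∅ := eq_empty_of_forall_notMem fun p hp => hπ.1.2 p hp
    simp
  mono _ _ hST := le_iInf₂ fun δ hδ => (iInf₂_le δ hδ).trans (weightedPackPre_mono le_rfl hST)
  add_le_union S T hST := le_iInf₂ fun δ hδ => by
    obtain ⟨r, hr, hrST⟩ := hST.exists_pos_le_dist
    have hδ' : 0 < min δ (r / 2) := lt_min hδ (by positivity)
    calc weightedPackPre0 w h Δ S + weightedPackPre0 w h Δ T
        ≤ weightedPackPre w h Δ (min δ (r / 2)) S + weightedPackPre w h Δ (min δ (r / 2)) T :=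
          add_le_add (iInf₂_le _ hδ') (iInf₂_le _ hδ')
      _ ≤ weightedPackPre w h Δ (min δ (r / 2)) (S ∪ T) :=
          weightedPackPre_add_le_union ((min_le_right _ _).trans_lt (by linarith)) hrST
      _ ≤ weightedPackPre w h Δ δ (S ∪ T) := weightedPackPre_mono (min_le_left _ _) subset_rfl

lemma const_mul_weightedPackPre0_le {c : ℝ≥0∞} {S : Set X} (hw : ∀ x ∈ S, c ≤ w x) :
    c * weightedPackPre0 1 h Δ S ≤ weightedPackPre0 w h Δ S := by
  refine le_iInf₂ fun δ hδ => (mul_le_mul_right (iInf₂_le δ hδ) c).trans ?_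
  simp only [weightedPackPre, ENNReal.mul_iSup, ← ENNReal.tsum_mul_left, Pi.one_apply, one_mul]
  exact iSup₂_mono fun _ hπ => ENNReal.tsum_le_tsum fun p =>
    mul_le_mul_left (hw _ (hπ.1.2 _ p.2)) _

end WeightedPacking

section Capacity

variable {S : Set X} {δ : ℝ}

lemma le_capacity {F : Finset X} (hFS : ↑F ⊆ S) (hF : ∀ x ∈ F, ∀ y ∈ F, x ≠ y → δ < dist x y) :
    (F.card : ℝ≥0∞) ≤ capacity δ S :=
  le_iSup₂ (f := fun F (_ : ↑F ⊆ S ∧ ∀ x ∈ F, ∀ y ∈ F, x ≠ y → δ < dist x y) =>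
    (F.card : ℝ≥0∞)) F ⟨hFS, hF⟩

lemma exists_finset_of_lt_capacity {a : ℝ≥0∞} (h : a < capacity δ S) :
    ∃ F : Finset X, (↑F ⊆ S ∧ ∀ x ∈ F, ∀ y ∈ F, x ≠ y → δ < dist x y) ∧ a < F.card := by
  simpa only [capacity, lt_iSup_iff, exists_prop] using h

lemma capacity_antitone (S : Set X) : Antitone fun δ => capacity δ S := fun _ _ hδ =>
  iSup₂_le fun _ hF => le_capacity hF.1 fun x hx y hy hxy => hδ.trans_lt (hF.2 x hx y hy hxy)

end Capacity

section Lifting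

variable {Δ : Set ℝ} {δ : ℝ} {E : Set (X × Y)}

open Classical in
lemma isScaledPacking_biUnion_image {F : Finset (X × ℝ)}
    (hF : IsScaledPacking Δ δ ↑F (univ : Set X)) (G : X × ℝ → Finset Y)
    (hGE : ∀ p ∈ F, ↑(G p) ⊆ sect E p.1)
    (hG : ∀ p ∈ F, ∀ y ∈ G p, ∀ z ∈ G p, y ≠ z → p.2 < dist y z) :
    IsScaledPacking Δ δ ↑(F.biUnion fun p => (G p).image fun y => ((p.1, y), p.2)) E := by
  simp only [IsScaledPacking, IsPackingOf, IsPacking, Finset.coe_biUnion, Finset.coe_image,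
    mem_iUnion, mem_image, Finset.mem_coe, exists_prop]
  refine ⟨⟨⟨?_, ?_⟩, ?_⟩, ?_⟩
  · rintro _ ⟨p, hp, y, -, rfl⟩
    exact hF.1.1.1 p hp
  · rintro _ ⟨p, hp, y, hy, rfl⟩ _ ⟨q, hq, z, hz, rfl⟩ hne
    rw [Prod.dist_eq]
    by_cases hpq : p = q
    · subst hpq
      exact (hG p hp y hy z hz fun h => hne (by rw [h])).trans_le (le_max_right _ _)
    · exact (hF.1.1.2 p hp q hq hpq).trans_le (le_max_left _ _)
  · rintro _ ⟨p, hp, y, hy, rfl⟩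
    exact hGE p hp hy
  · rintro _ ⟨p, hp, y, -, rfl⟩
    exact hF.2 p hp

lemma sum_card_mul_le_packPre (k : ℝ → ℝ) {F : Finset (X × ℝ)}
    (hF : IsScaledPacking Δ δ ↑F (univ : Set X)) (G : X × ℝ → Finset Y)
    (hGE : ∀ p ∈ F, ↑(G p) ⊆ sect E p.1)
    (hG : ∀ p ∈ F, ∀ y ∈ G p, ∀ z ∈ G p, y ≠ z → p.2 < dist y z) :
    ∑ p ∈ F, ((G p).card : ℝ≥0∞) * ENNReal.ofReal (k p.2) ≤ packPre k Δ δ E := by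
  classical
  have hdisj : (↑F : Set (X × ℝ)).PairwiseDisjoint fun p => (G p).image fun y => ((p.1, y), p.2) :=
    fun p _ q _ hpq => Finset.disjoint_left.2 fun e hep heq => by
      obtain ⟨y, -, rfl⟩ := Finset.mem_image.1 hep
      obtain ⟨z, -, he⟩ := Finset.mem_image.1 heq
      simp only [Prod.mk.injEq] at he
      exact hpq (Prod.ext he.1.1.symm he.2.symm)
  calc ∑ p ∈ F, ((G p).card : ℝ≥0∞) * ENNReal.ofReal (k p.2)
      = ∑ e ∈ F.biUnion fun p => (G p).image fun y => ((p.1, y), p.2), ENNReal.ofReal (k e.2) := by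
        rw [Finset.sum_biUnion hdisj]
        refine Finset.sum_congr rfl fun p _ => ?_
        rw [Finset.sum_image fun y _ z _ h => (Prod.ext_iff.1 (Prod.ext_iff.1 h).1).2]
        simp
    _ = packVal k ↑(F.biUnion fun p => (G p).image fun y => ((p.1, y), p.2)) :=
        (Finset.tsum_subtype _ fun e : (X × Y) × ℝ => ENNReal.ofReal (k e.2)).symm
    _ ≤ packPre k Δ δ E :=
        le_iSup₂ (f := fun π (_ : IsScaledPacking Δ δ π E) => packVal k π) _
          (isScaledPacking_biUnion_image hF G hGE hG)

lemma sum_capacity_sect_mul_le_packPre (k : ℝ → ℝ) {F : Finset (X × ℝ)}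
    (hF : IsScaledPacking Δ δ ↑F (univ : Set X)) :
    ∑ p ∈ F, capacity p.2 (sect E p.1) * ENNReal.ofReal (k p.2) ≤ packPre k Δ δ E := by
  classical
  let Adm (p : X × ℝ) :=
    {G : Finset Y // ↑G ⊆ sect E p.1 ∧ ∀ y ∈ G, ∀ z ∈ G, y ≠ z → p.2 < dist y z}
  let G₀ : ∀ p, Adm p := fun p => ⟨∅, by simp, by simp⟩
  -- Index every supremum by choices of admissible sets for all balls at once, so that the sum
  -- of suprema becomes a supremum of sums (`ENNReal.finsetSum_iSup`).
  have hcap : ∀ p, capacity p.2 (sect E p.1) * ENNReal.ofReal (k p.2)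
      = ⨆ G : ∀ q, Adm q, ((G p).1.card : ℝ≥0∞) * ENNReal.ofReal (k p.2) := fun p => by
    rw [capacity, iSup_subtype', ENNReal.iSup_mul]
    refine le_antisymm (iSup_le fun G => ?_) (iSup_le fun G => le_iSup_of_le (G p) le_rfl)
    exact le_iSup_of_le (Function.update G₀ p G) (by rw [Function.update_self])
  rw [Finset.sum_congr rfl fun p _ => hcap p, ENNReal.finsetSum_iSup]
  · exact iSup_le fun G => sum_card_mul_le_packPre k hF (fun p => (G p).1)
      (fun p _ => (G p).2.1) fun p _ => (G p).2.2
  · intro G G'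
    refine ⟨fun p => if (G p).1.card ≤ (G' p).1.card then G' p else G p, fun p => ?_⟩
    dsimp only
    split_ifs with hp
    · exact ⟨mul_le_mul_left (by exact_mod_cast hp) _, le_rfl⟩
    · exact ⟨le_rfl, mul_le_mul_left (by exact_mod_cast (not_le.1 hp).le) _⟩

lemma weightedPackPre_univ_le_packPre {w : X → ℝ≥0∞} {g h : ℝ → ℝ}
    (hg : ∀ r, 0 < r → 0 ≤ g r)
    (hw : ∀ x r, 0 < r → r ≤ δ → w x ≤ capacity r (sect E x) * ENNReal.ofReal (g r)) :
    weightedPackPre w h Δ δ univ ≤ packPre (fun r => g r * h r) Δ δ E := by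
  refine iSup₂_le fun π hπ => ?_
  rw [ENNReal.tsum_eq_iSup_sum]
  refine iSup_le fun σ => ?_
  calc ∑ p ∈ σ, w p.1.1 * ENNReal.ofReal (h p.1.2)
      ≤ ∑ p ∈ σ, capacity p.1.2 (sect E p.1.1) * ENNReal.ofReal (g p.1.2 * h p.1.2) :=
        Finset.sum_le_sum fun p _ => by
          have hr := hπ.1.1.1 _ p.2
          rw [ENNReal.ofReal_mul (hg _ hr), ← mul_assoc]
          exact mul_le_mul_left (hw _ _ hr (hπ.2 _ p.2).2) _
    _ = ∑ p ∈ σ.map (Function.Embedding.subtype _),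
          capacity p.2 (sect E p.1) * ENNReal.ofReal (g p.2 * h p.2) :=
        (Finset.sum_map σ (Function.Embedding.subtype _) fun p =>
          capacity p.2 (sect E p.1) * ENNReal.ofReal (g p.2 * h p.2)).symm
    _ ≤ _ := sum_capacity_sect_mul_le_packPre _ (hπ.mono (fun p hp => by
          obtain ⟨q, -, rfl⟩ := Finset.mem_map.1 hp
          exact q.2) subset_rfl)

end Lifting

end PackingPremeasures

section Measurability

variable {X : Type*} {Y : Type*} [MetricSpace Y] {E : Set (X × Y)} {δ : ℝ}

-- Non-strict separation, unlike in `capacity`, so that the set is closed when `E` is compact.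
def sectSeparated (E : Set (X × Y)) (q : ℝ) (k : ℕ) : Set X :=
  {x | ∃ f : Fin k → Y, (∀ i, (x, f i) ∈ E) ∧ Pairwise fun i j => q ≤ dist (f i) (f j)}

lemma isClosed_sectSeparated [TopologicalSpace X] [T2Space X] (hE : IsCompact E) (q : ℝ) (k : ℕ) :
    IsClosed (sectSeparated E q k) := by
  cases k with
  | zero =>
    rw [show sectSeparated E q 0 = univ from
      eq_univ_of_forall fun _ => ⟨Fin.elim0, fun i => i.elim0, fun i => i.elim0⟩]
    exact isClosed_univ
  | succ n =>
    -- `sectSeparated E q (n + 1)` is the projection of a closed subset `C` of the compact set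
    -- `π₁(E) × π₂(E)ⁿ⁺¹`.
    let C := {p : X × (Fin (n + 1) → Y) |
      (∀ i, (p.1, p.2 i) ∈ E) ∧ Pairwise fun i j => q ≤ dist (p.2 i) (p.2 j)}
    have hC : IsClosed C := by
      simp only [C, ofPred_and, ofPred_forall, Pairwise]
      refine (isClosed_iInter fun i => hE.isClosed.preimage (by fun_prop)).inter
        (isClosed_iInter fun i => isClosed_iInter fun j => isClosed_iInter fun _ =>
          isClosed_le continuous_const (by fun_prop))
    have hCK : C ⊆ (Prod.fst '' E) ×ˢ univ.pi fun _ => Prod.snd '' E :=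
      fun p hp => ⟨⟨_, hp.1 0, rfl⟩, fun i _ => ⟨_, hp.1 i, rfl⟩⟩
    have hK := (hE.image continuous_fst).prod
      (isCompact_univ_pi fun _ : Fin (n + 1) => hE.image continuous_snd)
    have : sectSeparated E q (n + 1) = Prod.fst '' C := by
      ext x
      exact ⟨fun ⟨f, hf⟩ => ⟨(x, f), hf, rfl⟩, fun ⟨p, hp, hpx⟩ => hpx ▸ ⟨p.2, hp⟩⟩
    rw [this]
    exact ((hK.of_isClosed_subset hC hCK).image continuous_fst).isClosed

lemma le_capacity_of_mem_sectSeparated {x : X} {q : ℝ} {k : ℕ} (hδ : 0 ≤ δ) (hq : δ < q)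
    (hx : x ∈ sectSeparated E q k) : (k : ℝ≥0∞) ≤ capacity δ (sect E x) := by
  classical
  obtain ⟨f, hfE, hf⟩ := hx
  have hinj : Function.Injective f := fun i j hij => by
    by_contra hne
    have : q ≤ dist (f i) (f j) := hf hne
    rw [hij, dist_self] at this
    linarith
  calc (k : ℝ≥0∞) = (Finset.univ.image f).card := by
        rw [Finset.card_image_of_injective _ hinj, Finset.card_univ, Fintype.card_fin]
    _ ≤ capacity δ (sect E x) := le_capacity
      (by rw [Finset.coe_image, Finset.coe_univ, image_univ]; exact range_subset_iff.2 hfE) (by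
        simp only [Finset.mem_image, Finset.mem_univ, true_and]
        rintro _ ⟨i, rfl⟩ _ ⟨j, rfl⟩ hij
        exact hq.trans_le (hf (ne_of_apply_ne f hij)))

lemma exists_mem_sectSeparated_of_lt_capacity {x : X} {a : ℝ≥0∞}
    (ha : a < capacity δ (sect E x)) :
    ∃ k : ℕ, a < k ∧ ∃ m : ℕ, x ∈ sectSeparated E (δ + 1 / (m + 1)) k := by
  obtain ⟨F, ⟨hFE, hFsep⟩, hFa⟩ := exists_finset_of_lt_capacity ha
  have hlim : Tendsto (fun m : ℕ => δ + 1 / ((m : ℝ) + 1)) atTop (𝓝 δ) := by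
    simpa using (tendsto_const_nhds (x := δ)).add (tendsto_one_div_add_atTop_nhds_zero_nat (𝕜 := ℝ))
  have hev : ∀ᶠ m : ℕ in atTop, ∀ p ∈ F.offDiag, δ + 1 / ((m : ℝ) + 1) < dist p.1 p.2 :=
    (eventually_all_finset _).2 fun p hp => by
      obtain ⟨h₁, h₂, hne⟩ := Finset.mem_offDiag.1 hp
      exact hlim.eventually (eventually_lt_nhds (hFsep _ h₁ _ h₂ hne))
  obtain ⟨m, hm⟩ := hev.exists
  refine ⟨F.card, hFa, m, fun i => (F.equivFin.symm i : Y), fun i => hFE (F.equivFin.symm i).2,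
    fun i j hij => (hm (_, _) (Finset.mem_offDiag.2 ⟨(F.equivFin.symm i).2,
      (F.equivFin.symm j).2, fun h => hij (F.equivFin.symm.injective (Subtype.ext h))⟩)).le⟩

lemma measurable_capacity_sect [TopologicalSpace X] [T2Space X] [MeasurableSpace X]
    [BorelSpace X] (hE : IsCompact E) (hδ : 0 ≤ δ) : Measurable fun x => capacity δ (sect E x) := by
  refine measurable_of_Ioi fun a => ?_
  have : (fun x => capacity δ (sect E x)) ⁻¹' Ioi a =
      ⋃ (k : ℕ) (_ : a < k) (m : ℕ), sectSeparated E (δ + 1 / (m + 1)) k := by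
    ext x
    simp only [mem_preimage, mem_Ioi, mem_iUnion, exists_prop]
    exact ⟨exists_mem_sectSeparated_of_lt_capacity, fun ⟨k, hak, m, hm⟩ =>
      hak.trans_le (le_capacity_of_mem_sectSeparated hδ (by simp; positivity) hm)⟩
  rw [this]
  exact .iUnion fun k => .iUnion fun _ => .iUnion fun m =>
    (isClosed_sectSeparated hE _ k).measurableSet

end Measurability

section LowerBox

variable {Y : Type*} [MetricSpace Y] {g : ℝ → ℝ}

noncomputable def lboxInf (g : ℝ → ℝ) (a : ℝ) (S : Set Y) : ℝ≥0∞ :=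
  ⨅ δ ∈ Ioo 0 a, capacity δ S * ENNReal.ofReal (g δ)

lemma lboxInf_anti {a b : ℝ} (hab : a ≤ b) (S : Set Y) : lboxInf g b S ≤ lboxInf g a S :=
  biInf_mono fun _ hδ => ⟨hδ.1, hδ.2.trans_le hab⟩

lemma lboxPre0_eq_iSup_lboxInf (g : ℝ → ℝ) (S : Set Y) :
    lboxPre0 g S = ⨆ n : ℕ, lboxInf g (1 / (n + 1)) S := by
  have hball : ∀ n : ℕ,
      Metric.ball 0 (1 / ((n : ℝ) + 1)) ∩ Ioi 0 = Ioo (0 : ℝ) (1 / ((n : ℝ) + 1)) :=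
    fun n => by
      have : (0 : ℝ) < 1 / (n + 1) := by positivity
      ext δ
      simp only [Metric.mem_ball, Real.dist_eq, sub_zero, abs_lt, mem_inter_iff, mem_Ioo, mem_Ioi]
      exact ⟨fun ⟨⟨_, h⟩, h'⟩ => ⟨h', h⟩, fun ⟨h', h⟩ => ⟨⟨by linarith, h⟩, h'⟩⟩
  rw [lboxPre0, (nhdsWithin_hasBasis Metric.nhds_basis_ball_inv_nat_succ _).liminf_eq_iSup_iInf]
  simp only [iSup_true, lboxInf, hball]

lemma exists_countable_biInf_Ioo_eq (hg : IsHausdorffFunction g) :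
    ∃ R : Set ℝ, R.Countable ∧ ∀ u : ℝ → ℝ≥0∞, Antitone u → ∀ a : ℝ,
      ⨅ δ ∈ Ioo 0 a, u δ * ENNReal.ofReal (g δ) =
        ⨅ δ ∈ R ∩ Ioo 0 a, u δ * ENNReal.ofReal (g δ) := by
  set R := range ((↑) : ℚ → ℝ) ∪ {x ∈ Ioi (0 : ℝ) | ¬ContinuousWithinAt g (Ioi 0 ∩ Ioi x) x}
  refine ⟨R, (countable_range _).union hg.1.countable_not_continuousWithinAt_Ioi,
    fun u hu a => le_antisymm (biInf_mono fun _ h => h.2) (le_iInf₂ fun δ hδ => ?_)⟩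
  by_cases hδR : δ ∈ R
  · exact iInf₂_le δ ⟨hδR, hδ⟩
  -- `g` is right-continuous at `δ`, so rational radii slightly above `δ` do as well as `δ`.
  have hcont : ContinuousWithinAt g (Ioi δ) δ := by
    have := not_not.1 fun h => hδR (Or.inr ⟨hδ.1, h⟩)
    rwa [inter_eq_right.2 (Ioi_subset_Ioi hδ.1.le)] at this
  have hlim : Tendsto (fun q => u δ * ENNReal.ofReal (g q)) (𝓝[>] δ)
      (𝓝 (u δ * ENNReal.ofReal (g δ))) :=
    ENNReal.Tendsto.const_mul (ENNReal.tendsto_ofReal hcont)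
      (Or.inl (ENNReal.ofReal_pos.2 (hg.2 δ hδ.1)).ne')
  have hrat : ∃ᶠ q in 𝓝[>] δ, q ∈ range ((↑) : ℚ → ℝ) := frequently_iff.2 fun hU => by
    obtain ⟨b, hb, hsub⟩ := mem_nhdsGT_iff_exists_Ioo_subset.1 hU
    obtain ⟨q, hq⟩ := exists_rat_btwn (mem_Ioi.1 hb)
    exact ⟨q, hsub hq, q, rfl⟩
  refine ge_of_tendsto_of_frequently hlim ((hrat.and_eventually (Ioo_mem_nhdsGT hδ.2)).mono ?_)
  rintro q ⟨hqR, hq⟩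
  exact (iInf₂_le q ⟨Or.inl hqR, hδ.1.trans hq.1, hq.2⟩).trans (mul_le_mul_left (hu hq.1.le) _)

variable {X : Type*} [TopologicalSpace X] [T2Space X] [MeasurableSpace X] [BorelSpace X]
  {E : Set (X × Y)}

lemma measurable_lboxInf_sect (hE : IsCompact E) (hg : IsHausdorffFunction g) (a : ℝ) :
    Measurable fun x => lboxInf g a (sect E x) := by
  obtain ⟨R, hR, hRinf⟩ := exists_countable_biInf_Ioo_eq hg
  simp only [lboxInf, hRinf _ (capacity_antitone _)]
  exact Measurable.biInf _ (hR.mono inter_subset_left) fun δ hδ =>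
    (measurable_capacity_sect hE hδ.2.1.le).mul_const _

lemma measurable_lboxPre0_sect (hE : IsCompact E) (hg : IsHausdorffFunction g) :
    Measurable fun x => lboxPre0 g (sect E x) := by
  simp only [lboxPre0_eq_iSup_lboxInf]
  exact Measurable.iSup fun n => measurable_lboxInf_sect hE hg _

end LowerBox

section Integral

variable {X : Type*} [MetricSpace X] [MeasurableSpace X] [BorelSpace X] {Y : Type*}
  [MetricSpace Y] {g h : ℝ → ℝ} {Δ : Set ℝ} {E : Set (X × Y)}

noncomputable def packingMeasure (h : ℝ → ℝ) (Δ : Set ℝ) : Measure X :=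
  (isMetricPremeasure_weightedPackPre0 (w := (1 : X → ℝ≥0∞)) (h := h) (Δ := Δ)).measure

lemma packingMeasure_apply {B : Set X} (hB : MeasurableSet B) :
    packingMeasure h Δ B = packMeasure h Δ B := by
  rw [packingMeasure, IsMetricPremeasure.measure_apply _ hB, packMeasure,
    packPre0_eq_weightedPackPre0_one]

lemma simpleFunc_lintegral_packingMeasure_le (s : SimpleFunc X ℝ≥0∞) :
    s.lintegral (packingMeasure h Δ) ≤ weightedPackPre0 s h Δ univ := by
  have hν := isMetricPremeasure_weightedPackPre0 (w := ⇑s) (h := h) (Δ := Δ)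
  calc s.lintegral (packingMeasure h Δ) = ∑ y ∈ s.range, y * packingMeasure h Δ (s ⁻¹' {y}) := rfl
    _ ≤ ∑ y ∈ s.range, hν.measure (s ⁻¹' {y}) := Finset.sum_le_sum fun y _ => by
        rw [packingMeasure, IsMetricPremeasure.measure_apply _ (s.measurableSet_fiber y),
          hν.measure_apply (s.measurableSet_fiber y)]
        exact const_mul_methodI_le subset_rfl fun S =>
          (const_mul_weightedPackPre0_le fun x hx => (show s x = y from hx.2).ge).trans
            (hν.mono inter_subset_left)
    _ = hν.measure univ := s.sum_range_measure_preimage_singleton _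
    _ ≤ weightedPackPre0 s h Δ univ := hν.measure_univ_le

lemma lintegral_packingMeasure_le_packPre0 (hg : ∀ r, 0 < r → 0 ≤ g r) {a : ℝ} (ha : 0 < a)
    {f : X → ℝ≥0∞} (hf : ∀ x, f x ≤ lboxInf g a (sect E x)) :
    ∫⁻ x, f x ∂packingMeasure h Δ ≤ packPre0 (fun r => g r * h r) Δ E := by
  rw [lintegral_def]
  refine iSup₂_le fun s hs =>
    (simpleFunc_lintegral_packingMeasure_le s).trans (le_iInf₂ fun δ hδ => ?_)
  have hδ' : 0 < min δ (a / 2) := lt_min hδ (half_pos ha)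
  refine (iInf₂_le _ hδ').trans ((weightedPackPre_univ_le_packPre hg fun x r hr hrδ => ?_).trans
    (packPre_mono_delta _ (min_le_left _ _) _))
  exact (hs x).trans ((hf x).trans (iInf₂_le r
    ⟨hr, hrδ.trans_lt ((min_le_right _ _).trans_lt (half_lt_self ha))⟩))

lemma lintegral_lboxPre0_sect_le (hE : IsCompact E) (hg : IsHausdorffFunction g) :
    ∫⁻ x, lboxPre0 g (sect E x) ∂packingMeasure h Δ ≤ packPre0 (fun r => g r * h r) Δ E := by
  simp only [lboxPre0_eq_iSup_lboxInf]
  rw [lintegral_iSup (fun n => measurable_lboxInf_sect hE hg _)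
    fun m n hmn x => lboxInf_anti (one_div_le_one_div_of_le (by positivity) (by gcongr)) _]
  exact iSup_le fun n => lintegral_packingMeasure_le_packPre0 (fun r hr => (hg.2 r hr).le)
    (by positivity) fun x => le_rfl

end Integral

end ZPaper

theorem stmt7_general {X Y : Type*} [MetricSpace X] [MetricSpace Y] (g h : ℝ → ℝ)
    (hg : IsHausdorffFunction g)
    (Δ : Set ℝ) (E : Set (X × Y)) (hE : IsCompact E) :
    (@Measurable X ℝ≥0∞ (borel X) _ (fun x => lboxPre0 g (sect E x))) ∧
    packPre0 (fun r => g r * h r) Δ E ≥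
      sLintegral (packMeasure h Δ) (fun x => lboxPre0 g (sect E x)) := by
  let _ : MeasurableSpace X := borel X
  have _ : BorelSpace X := ⟨rfl⟩
  refine ⟨measurable_lboxPre0_sect hE hg,
    le_trans (iSup₂_le fun s hs => ?_) (lintegral_lboxPre0_sect_le hE hg)⟩
  calc ∑ y ∈ s.range, y * packMeasure h Δ (s ⁻¹' {y}) = s.lintegral (packingMeasure h Δ) :=
        Finset.sum_congr rfl fun y _ => by rw [packingMeasure_apply (s.measurableSet_fiber y)]
    _ ≤ ∫⁻ x, lboxPre0 g (sect E x) ∂packingMeasure h Δ :=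
        s.lintegral_eq_lintegral _ ▸ lintegral_mono hs

/-- Lemma `lem:cpt`. If `E ⊆ X × Y` is compact, then
`x ↦ lboxm^g_0(E_x)` is Borel measurable and
`pack^{gh}_{Δ,0}(E) ≥ ∫ lboxm^g_0(E_x) d pack^h_Δ(x)`. -/
theorem stmt7 {X Y : Type*} [MetricSpace X] [MetricSpace Y] (g h : ℝ → ℝ)
    (hg : IsHausdorffFunction g) (hh : IsHausdorffFunction h)
    (Δ : Set ℝ) (hΔ : IsScale Δ) (E : Set (X × Y)) (hE : IsCompact E) :
    (@Measurable X ℝ≥0∞ (borel X) _ (fun x => lboxPre0 g (sect E x))) ∧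
    packPre0 (fun r => g r * h r) Δ E ≥
      sLintegral (packMeasure h Δ) (fun x => lboxPre0 g (sect E x)) :=
  stmt7_general g h hg Δ E hE
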